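/- arXiv:1402.1230 — 2 statements merged into one kernel-verified Lean document; each statement's English description precedes it below -/
import Mathlib

section
/- With F(z,t) the multivariate generating function for walks in ℕ^d from the origin with highly symmetric step set S, and G the group of the 2^d sign-inversion substitutions σ: z_k ↦ z_k^{ε_k}, the orbit sum identity holds: ∑_{σ ∈ G} sgn(σ) · σ(z_1⋯z_d) · σ(F(z,t)) = (∑_{σ ∈ G} sgn(σ) σ(z_1⋯z_d)) / (1 − t S(z)) = (z_1 − z_1^{−1})⋯(z_d − z_d^{−1}) / (1 − t S(z)), as elements of ℚ[z_1, z_1^{−1}, …, z_d, z_d^{−1}][[t]]. -/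
/-- Multivariate Laurent polynomials `ℚ[z₁,z₁⁻¹,…,z_d,z_d⁻¹]`. -/
abbrev LPoly (d : ℕ) := AddMonoidAlgebra ℚ (Fin d →₀ ℤ)

/-- The Laurent monomial `z^i`. -/
noncomputable def zmon (d : ℕ) (i : Fin d → ℤ) : LPoly d :=
  AddMonoidAlgebra.ofCoeff (Finsupp.single (Finsupp.equivFunOnFinite.symm i) (1 : ℚ))

/-- The characteristic Laurent polynomial `S(z) = ∑_{s ∈ S} z^s`. -/
noncomputable def charL (d : ℕ) (S : Finset (Fin d → ℤ)) : LPoly d :=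
  ∑ s ∈ S, zmon d s

/-- The substitution `z_k ↦ z_k^{ε_k}` acting on Laurent polynomials. -/
noncomputable def sigmaL (d : ℕ) (ε : Fin d → Bool) (a : LPoly d) : LPoly d :=
  AddMonoidAlgebra.ofCoeff (Finsupp.mapDomain
    (fun e => Finsupp.equivFunOnFinite.symm fun k => (if ε k then 1 else (-1 : ℤ)) * e k) a.coeff)

/-- `sgn(σ_ε) = (-1)^{#{k : ε_k = -1}}`. -/
def sgnL (d : ℕ) (ε : Fin d → Bool) : ℚ :=
  (-1) ^ (Finset.univ.filter fun k => ε k = false).card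

/-- The number of walks of length `n`, with steps in `S`, from the origin, staying in
`ℕ^d` and ending at `i`. -/
noncomputable def WalkCount (d : ℕ) (S : Finset (Fin d → ℤ)) (n : ℕ) (i : Fin d → ℤ) : ℕ :=
  Nat.card {w : Fin n → (Fin d → ℤ) //
    (∀ m, w m ∈ S) ∧
    (∀ m : ℕ, ∀ k, 0 ≤ ∑ l ∈ Finset.univ.filter (fun l : Fin n => (l : ℕ) < m), w l k) ∧
    (∀ k, ∑ m, w m k = i k)}

/-- The full generating function `F(z,t) ∈ ℚ[z,z⁻¹][[t]]` of the walks. -/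
noncomputable def walkGF (d : ℕ) (S : Finset (Fin d → ℤ)) : PowerSeries (LPoly d) :=
  PowerSeries.mk fun n =>
    ∑ i : Fin d → Fin (n + 1),
      ((WalkCount d S n fun j => ((i j : ℕ) : ℤ)) : ℚ) • zmon d fun j => ((i j : ℕ) : ℤ)

/-! The signed orbit sum `Φ(a) = ∑_σ sgn(σ) σ(z₁⋯z_d · a)` is `ℚ`-linear and commutes with
multiplication by the `G`-invariant `S(z)`. It kills every monomial `z^i` with some `i_k = -1`:
`∑_σ sgn(σ) σ(z^v)` factors as `∏_k (z_k^{v_k} - z_k^{-v_k})`, and the factor with `v_k = 0`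
vanishes. Removing the last step of a walk shows that `[tⁿ⁺¹]F - S(z)·[tⁿ]F` only involves
monomials with a coordinate equal to `-1` (the walks that would leave the orthant), so
`Φ([tⁿ⁺¹]F) = S(z) Φ([tⁿ]F)` and `Φ([tⁿ]F) = Φ(1) S(z)ⁿ`. The same factorization with
`v = (1,…,1)` evaluates `Φ(1)`. -/

open Finset

section

variable {d : ℕ}

def signVec (ε : Fin d → Bool) : Fin d → ℤ := fun k => if ε k then 1 else -1

noncomputable def signFlip (ε : Fin d → Bool) : (Fin d →₀ ℤ) →+ (Fin d →₀ ℤ) where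
  toFun e := Finsupp.equivFunOnFinite.symm (signVec ε * ⇑e)
  map_zero' := by ext; simp
  map_add' a b := by ext; simp [mul_add]

noncomputable def sigmaAlgHom (ε : Fin d → Bool) : LPoly d →ₐ[ℚ] LPoly d :=
  AddMonoidAlgebra.mapDomainAlgHom ℚ ℚ (signFlip ε)

theorem coe_sigmaAlgHom (ε : Fin d → Bool) : ⇑(sigmaAlgHom ε) = sigmaL d ε := rfl

theorem zmon_eq_single (i : Fin d → ℤ) :
    zmon d i = AddMonoidAlgebra.single (Finsupp.addEquivFunOnFinite.symm i) 1 := rfl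

theorem zmon_zero : zmon d 0 = 1 := by
  rw [zmon_eq_single, map_zero]; rfl

theorem prod_zmon {ι : Type*} (s : Finset ι) (v : ι → Fin d → ℤ) :
    ∏ x ∈ s, zmon d (v x) = zmon d (∑ x ∈ s, v x) := by
  simp only [zmon_eq_single, AddMonoidAlgebra.prod_single, map_sum, prod_const_one]

theorem zmon_add (a b : Fin d → ℤ) : zmon d (a + b) = zmon d a * zmon d b := by
  simpa using (prod_zmon {true, false} (fun x => if x then a else b)).symm

theorem sigmaL_zmon (ε : Fin d → Bool) (i : Fin d → ℤ) :
    sigmaL d ε (zmon d i) = zmon d (signVec ε * i) := by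
  rw [← coe_sigmaAlgHom, zmon_eq_single, sigmaAlgHom, AddMonoidAlgebra.mapDomainAlgHom_apply,
    AddMonoidAlgebra.mapDomain_single]
  rfl

theorem sgnL_eq_prod (ε : Fin d → Bool) : sgnL d ε = ∏ k, (signVec ε k : ℚ) := by
  simp [sgnL, signVec, apply_ite, prod_ite]

theorem sum_sgnL_smul_sigmaL_zmon (v : Fin d → ℤ) :
    ∑ ε, sgnL d ε • sigmaL d ε (zmon d v) =
      ∏ k, (zmon d (Pi.single k (v k)) - zmon d (Pi.single k (-v k))) := by
  have factor : ∀ k, zmon d (Pi.single k (v k)) - zmon d (Pi.single k (-v k)) =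
      ∑ b : Bool, ((if b then 1 else -1 : ℤ) : ℚ) •
        zmon d (Pi.single k ((if b then 1 else -1) * v k)) := by
    intro k
    simp [sub_eq_add_neg]
  rw [prod_congr rfl fun k _ => factor k, Fintype.prod_sum]
  refine sum_congr rfl fun ε _ => ?_
  rw [prod_smul, prod_zmon, sgnL_eq_prod, sigmaL_zmon]
  congr
  exact (Finset.univ_sum_single _).symm

noncomputable def orbitSum (d : ℕ) : LPoly d →ₗ[ℚ] LPoly d :=
  ∑ ε : Fin d → Bool,
    sgnL d ε • ((sigmaAlgHom ε).toLinearMap ∘ₗ LinearMap.mulLeft ℚ (zmon d fun _ => 1))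

theorem orbitSum_apply (a : LPoly d) :
    orbitSum d a = ∑ ε, sgnL d ε • sigmaL d ε ((zmon d fun _ => 1) * a) := by
  simp [orbitSum, LinearMap.sum_apply, coe_sigmaAlgHom]

theorem orbitSum_zmon_eq_zero {i : Fin d → ℤ} {k : Fin d} (hk : i k = -1) :
    orbitSum d (zmon d i) = 0 := by
  rw [orbitSum_apply, ← zmon_add, sum_sgnL_smul_sigmaL_zmon]
  exact prod_eq_zero (mem_univ k) (by simp [hk])

theorem signVec_mul_self (ε : Fin d → Bool) : signVec ε * signVec ε = 1 := by
  funext k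
  by_cases h : ε k <;> simp [signVec, h]

theorem ite_neg_mem {S : Finset (Fin d → ℤ)}
    (hsym : ∀ s ∈ S, ∀ k, Function.update s k (-(s k)) ∈ S) (A : Finset (Fin d))
    {s : Fin d → ℤ} (hs : s ∈ S) :
    (fun k => if k ∈ A then -s k else s k) ∈ S := by
  classical
  induction A using Finset.induction_on with
  | empty => simpa using hs
  | insert a A ha ih =>
    convert hsym _ ih a using 1
    funext k
    by_cases hk : k = a
    · subst hk; simp [ha]
    · simp [hk]

theorem signVec_mul_mem {S : Finset (Fin d → ℤ)}
    (hsym : ∀ s ∈ S, ∀ k, Function.update s k (-(s k)) ∈ S) (ε : Fin d → Bool)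
    {s : Fin d → ℤ} (hs : s ∈ S) : signVec ε * s ∈ S := by
  convert ite_neg_mem hsym (univ.filter fun k => ε k = false) hs using 1
  funext k
  by_cases h : ε k <;> simp [signVec, h]

theorem sigmaL_charL {S : Finset (Fin d → ℤ)}
    (hsym : ∀ s ∈ S, ∀ k, Function.update s k (-(s k)) ∈ S) (ε : Fin d → Bool) :
    sigmaL d ε (charL d S) = charL d S := by
  rw [charL, ← coe_sigmaAlgHom, map_sum]
  simp only [coe_sigmaAlgHom, sigmaL_zmon]
  refine sum_nbij' (signVec ε * ·) (signVec ε * ·) (fun s hs => signVec_mul_mem hsym ε hs)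
    (fun s hs => signVec_mul_mem hsym ε hs) (fun s _ => ?_) (fun s _ => ?_) fun _ _ => rfl <;>
    simp [← mul_assoc, signVec_mul_self]

theorem orbitSum_charL_mul {S : Finset (Fin d → ℤ)}
    (hsym : ∀ s ∈ S, ∀ k, Function.update s k (-(s k)) ∈ S) (a : LPoly d) :
    orbitSum d (charL d S * a) = charL d S * orbitSum d a := by
  simp only [orbitSum_apply, mul_sum, mul_smul_comm]
  refine sum_congr rfl fun ε _ => ?_
  rw [mul_left_comm, ← coe_sigmaAlgHom, map_mul, coe_sigmaAlgHom, sigmaL_charL hsym]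

noncomputable def coeffAt (j : Fin d → ℤ) : LPoly d →ₗ[ℚ] ℚ where
  toFun a := a.coeff (Finsupp.addEquivFunOnFinite.symm j)
  map_add' _ _ := rfl
  map_smul' _ _ := rfl

theorem coeffAt_apply (j : Fin d → ℤ) (a : LPoly d) :
    coeffAt j a = a.coeff (Finsupp.addEquivFunOnFinite.symm j) := rfl

theorem coeffAt_coe (e : Fin d →₀ ℤ) (a : LPoly d) : coeffAt (⇑e) a = a.coeff e :=
  congrArg a.coeff (Finsupp.equivFunOnFinite_symm_coe e)

theorem LPoly.ext_coeffAt {a b : LPoly d} (h : ∀ j, coeffAt j a = coeffAt j b) : a = b := by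
  ext e
  simpa only [coeffAt_coe] using h e

theorem coeffAt_zmon (i j : Fin d → ℤ) : coeffAt j (zmon d i) = if i = j then 1 else 0 := by
  simp [coeffAt_apply, zmon_eq_single, Finsupp.single_apply]

theorem coeffAt_zmon_mul (s j : Fin d → ℤ) (a : LPoly d) :
    coeffAt j (zmon d s * a) = coeffAt (j - s) a := by
  simp [coeffAt_apply, zmon_eq_single, sub_eq_neg_add]

theorem coeffAt_charL_mul (S : Finset (Fin d → ℤ)) (j : Fin d → ℤ) (a : LPoly d) :
    coeffAt j (charL d S * a) = ∑ s ∈ S, coeffAt (j - s) a := by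
  simp [charL, sum_mul, coeffAt_zmon_mul]

theorem orbitSum_eq_zero_of_coeffAt {a : LPoly d} (h : ∀ j, coeffAt j a ≠ 0 → ∃ k, j k = -1) :
    orbitSum d a = 0 := by
  rw [← AddMonoidAlgebra.sum_coeff_single a, Finsupp.sum, map_sum]
  refine sum_eq_zero fun e he => ?_
  obtain ⟨k, hk⟩ := h e (by rwa [coeffAt_coe, ← Finsupp.mem_support_iff])
  rw [← mul_one (a.coeff e), ← AddMonoidAlgebra.smul_single', map_smul,
    show AddMonoidAlgebra.single e 1 = zmon d e from congrArg (AddMonoidAlgebra.single · 1)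
      (Finsupp.equivFunOnFinite_symm_coe e).symm, orbitSum_zmon_eq_zero hk, smul_zero]

section Walks

def partialSum {n : ℕ} (w : Fin n → Fin d → ℤ) (m : ℕ) : Fin d → ℤ :=
  ∑ l ∈ univ.filter (fun l : Fin n => (l : ℕ) < m), w l

def IsOrthantWalk (S : Finset (Fin d → ℤ)) (i : Fin d → ℤ) {n : ℕ} (w : Fin n → Fin d → ℤ) :
    Prop :=
  (∀ m, w m ∈ S) ∧ (∀ m, 0 ≤ partialSum w m) ∧ ∑ m, w m = i

instance (S : Finset (Fin d → ℤ)) (i : Fin d → ℤ) (n : ℕ) :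
    Finite {w : Fin n → Fin d → ℤ // IsOrthantWalk S i w} :=
  Finite.of_injective (fun w m => (⟨w.1 m, w.2.1 m⟩ : S)) fun _ _ h =>
    Subtype.ext <| funext fun m => congrArg Subtype.val (congrFun h m)

variable {S : Finset (Fin d → ℤ)}

theorem walkCount_eq_card (n : ℕ) (i : Fin d → ℤ) :
    WalkCount d S n i = Nat.card {w : Fin n → Fin d → ℤ // IsOrthantWalk S i w} := by
  simp only [WalkCount, IsOrthantWalk, partialSum, Pi.le_def, funext_iff, Finset.sum_apply,
    Pi.zero_apply]

theorem partialSum_of_le {n m : ℕ} (w : Fin n → Fin d → ℤ) (h : n ≤ m) :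
    partialSum w m = ∑ l, w l := by
  rw [partialSum, filter_true_of_mem fun l _ => l.isLt.trans_le h]

theorem partialSum_eq_init {n : ℕ} (w : Fin (n + 1) → Fin d → ℤ) (m : ℕ) :
    partialSum w m = partialSum (Fin.init w) m + if n < m then w (Fin.last n) else 0 := by
  simp [partialSum, sum_filter, Fin.sum_univ_castSucc, Fin.init]

theorem isOrthantWalk_iff_init {n : ℕ} {j : Fin d → ℤ} (hj : 0 ≤ j)
    (w : Fin (n + 1) → Fin d → ℤ) :
    IsOrthantWalk S j w ↔
      w (Fin.last n) ∈ S ∧ IsOrthantWalk S (j - w (Fin.last n)) (Fin.init w) := by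
  have total : ∑ m, w m = ∑ m, Fin.init w m + w (Fin.last n) := Fin.sum_univ_castSucc w
  simp only [IsOrthantWalk, Fin.forall_fin_succ' (P := (w · ∈ S)), total, partialSum_eq_init,
    eq_sub_iff_add_eq]
  constructor
  · rintro ⟨⟨hinit, hlast⟩, hpos, htotal⟩
    refine ⟨hlast, hinit, fun m => ?_, htotal⟩
    rcases le_or_gt m n with hm | hm
    · simpa [hm.not_gt] using hpos m
    · simpa [partialSum_of_le _ hm.le, partialSum_of_le _ le_rfl] using hpos n
  · rintro ⟨hlast, hinit, hpos, htotal⟩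
    refine ⟨⟨hinit, hlast⟩, fun m => ?_, htotal⟩
    split_ifs with hm
    · rwa [partialSum_of_le _ hm.le, htotal]
    · simpa using hpos m

theorem walkCount_succ (n : ℕ) {j : Fin d → ℤ} (hj : 0 ≤ j) :
    WalkCount d S (n + 1) j = ∑ s ∈ S, WalkCount d S n (j - s) := by
  let e : {w : Fin (n + 1) → Fin d → ℤ // IsOrthantWalk S j w} ≃
      Σ s : S, {u : Fin n → Fin d → ℤ // IsOrthantWalk S (j - s) u} :=
    { toFun w :=
        have hw := (isOrthantWalk_iff_init hj w.1).1 w.2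
        ⟨⟨w.1 (Fin.last n), hw.1⟩, ⟨Fin.init w.1, hw.2⟩⟩
      invFun p := ⟨Fin.snoc p.2.1 p.1.1, (isOrthantWalk_iff_init hj _).2
        (by simpa only [Fin.snoc_last, Fin.init_snoc] using ⟨p.1.2, p.2.2⟩)⟩
      left_inv w := Subtype.ext (Fin.snoc_init_self w.1)
      right_inv p := Sigma.subtype_ext (Subtype.ext (Fin.snoc_last (α := fun _ => Fin d → ℤ) _ _))
        (Fin.init_snoc (α := fun _ => Fin d → ℤ) _ _) }
  rw [walkCount_eq_card, Nat.card_congr e, Nat.card_sigma, ← sum_coe_sort S]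
  simp only [walkCount_eq_card]

theorem walkCount_zero (i : Fin d → ℤ) : WalkCount d S 0 i = if i = 0 then 1 else 0 := by
  have : ∀ w : Fin 0 → Fin d → ℤ, IsOrthantWalk S i w ↔ i = 0 := fun w => by
    simp [IsOrthantWalk, partialSum, eq_comm]
  rw [walkCount_eq_card, Nat.card_congr (Equiv.subtypeEquivRight this)]
  split_ifs with h <;> simp [h]

theorem walkCount_eq_zero_of_not_nonneg {n : ℕ} {i : Fin d → ℤ} (h : ¬ 0 ≤ i) :
    WalkCount d S n i = 0 := by
  rw [walkCount_eq_card, Nat.card_eq_zero]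
  refine .inl ⟨fun ⟨w, _, hpos, htotal⟩ => h ?_⟩
  simpa [partialSum_of_le w le_rfl, htotal] using hpos n

theorem walkCount_eq_zero_of_lt (hS : ∀ s ∈ S, ∀ k, s k ≤ 1) {n : ℕ} {i : Fin d → ℤ} {k : Fin d}
    (h : (n : ℤ) < i k) : WalkCount d S n i = 0 := by
  rw [walkCount_eq_card, Nat.card_eq_zero]
  refine .inl ⟨fun ⟨w, hsteps, _, htotal⟩ => h.not_ge ?_⟩
  calc i k = ∑ m, w m k := by rw [← htotal, Finset.sum_apply]
    _ ≤ ∑ _m : Fin n, 1 := sum_le_sum fun m _ => hS _ (hsteps m) k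
    _ = n := by simp

end Walks

section GeneratingFunction

variable {S : Finset (Fin d → ℤ)}

theorem coeff_zero_walkGF : PowerSeries.coeff 0 (walkGF d S) = 1 := by
  simp [walkGF, walkCount_zero, ← zmon_zero, ← Pi.zero_def]

theorem coeffAt_coeff_walkGF (hS : ∀ s ∈ S, ∀ k, s k ≤ 1) (n : ℕ) (j : Fin d → ℤ) :
    coeffAt j (PowerSeries.coeff n (walkGF d S)) = WalkCount d S n j := by
  let c : (Fin d → Fin (n + 1)) → Fin d → ℤ := fun i k => ((i k : ℕ) : ℤ)
  have hc : Function.Injective c := fun i i' h =>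
    funext fun k => Fin.ext (by simpa [c] using congrFun h k)
  simp only [walkGF, PowerSeries.coeff_mk, map_sum, map_smul, coeffAt_zmon, smul_eq_mul,
    mul_ite, mul_one, mul_zero]
  by_cases hbox : ∀ k, 0 ≤ j k ∧ j k ≤ n
  · obtain ⟨i₀, rfl⟩ : ∃ i₀, c i₀ = j :=
      ⟨fun k => ⟨(j k).toNat, by have := hbox k; omega⟩, funext fun k => by simp [c, (hbox k).1]⟩
    rw [Fintype.sum_eq_single i₀ fun i hi => if_neg (hc.ne hi)]
    exact if_pos rfl
  · have hout : ∀ i, c i ≠ j := fun i hi => hbox fun k => by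
      have := (i k).isLt
      rw [← hi]
      simp only [c]
      omega
    rw [sum_eq_zero fun i _ => if_neg (hout i)]
    obtain ⟨k, hk⟩ := not_forall.1 hbox
    by_cases h0 : 0 ≤ j k
    · rw [walkCount_eq_zero_of_lt hS (not_le.1 fun h => hk ⟨h0, h⟩), Nat.cast_zero]
    · rw [walkCount_eq_zero_of_not_nonneg fun h => h0 (h k), Nat.cast_zero]

theorem coeffAt_charL_mul_coeff_walkGF (hS : ∀ s ∈ S, ∀ k, |s k| ≤ 1) (n : ℕ) {j : Fin d → ℤ}
    (hj : ∀ k, j k ≠ -1) :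
    coeffAt j (charL d S * PowerSeries.coeff n (walkGF d S)) =
      coeffAt j (PowerSeries.coeff (n + 1) (walkGF d S)) := by
  have hS' : ∀ s ∈ S, ∀ k, s k ≤ 1 := fun s hs k => le_of_abs_le (hS s hs k)
  simp only [coeffAt_charL_mul, coeffAt_coeff_walkGF hS']
  by_cases h0 : 0 ≤ j
  · rw [walkCount_succ n h0, Nat.cast_sum]
  · obtain ⟨k, hk⟩ : ∃ k, j k < 0 := by simpa [Pi.le_def] using h0
    rw [walkCount_eq_zero_of_not_nonneg h0, Nat.cast_zero]
    refine sum_eq_zero fun s hs => ?_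
    have hs_ge := (abs_le.1 (hS s hs k)).1
    have hjk := hj k
    refine Nat.cast_eq_zero.2 (walkCount_eq_zero_of_not_nonneg fun h => ?_)
    have hjs : 0 ≤ j k - s k := h k
    omega

theorem orbitSum_coeff_walkGF (hS : ∀ s ∈ S, ∀ k, |s k| ≤ 1)
    (hsym : ∀ s ∈ S, ∀ k, Function.update s k (-(s k)) ∈ S) (n : ℕ) :
    orbitSum d (PowerSeries.coeff n (walkGF d S)) = orbitSum d 1 * charL d S ^ n := by
  induction n with
  | zero => rw [coeff_zero_walkGF, pow_zero, mul_one]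
  | succ n ih =>
    have boundary : orbitSum d (charL d S * PowerSeries.coeff n (walkGF d S) -
        PowerSeries.coeff (n + 1) (walkGF d S)) = 0 :=
      orbitSum_eq_zero_of_coeffAt fun j hj => by
        by_contra! h
        exact hj (by rw [map_sub, coeffAt_charL_mul_coeff_walkGF hS n h, sub_self])
    rw [map_sub, sub_eq_zero, orbitSum_charL_mul hsym, ih] at boundary
    rw [← boundary, pow_succ]
    ring

end GeneratingFunction

end

theorem orbit_sum_identity_general (d : ℕ) (S : Finset (Fin d → ℤ))
    (hsteps : ∀ s ∈ S, (∀ k, s k = -1 ∨ s k = 0 ∨ s k = 1) ∧ s ≠ 0)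
    (hsym : ∀ s ∈ S, ∀ k, Function.update s k (-(s k)) ∈ S) :
    (∑ ε : Fin d → Bool,
        sgnL d ε • (PowerSeries.C (sigmaL d ε (zmon d fun _ => 1)) *
          PowerSeries.mk fun n => sigmaL d ε (PowerSeries.coeff n (walkGF d S)))) =
      PowerSeries.C (∑ ε : Fin d → Bool, sgnL d ε • sigmaL d ε (zmon d fun _ => 1)) *
        PowerSeries.mk (fun n => charL d S ^ n) ∧
    (∑ ε : Fin d → Bool, sgnL d ε • sigmaL d ε (zmon d fun _ => 1)) =
      ∏ k, (zmon d (fun j => if j = k then 1 else 0) -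
            zmon d (fun j => if j = k then -1 else 0)) := by
  have hS : ∀ s ∈ S, ∀ k, |s k| ≤ 1 := fun s hs k => by
    rcases (hsteps s hs).1 k with h | h | h <;> simp [h]
  have hΔ : ∑ ε, sgnL d ε • sigmaL d ε (zmon d fun _ => 1) = orbitSum d 1 := by
    simp [orbitSum_apply]
  constructor
  · ext n : 1
    rw [hΔ, PowerSeries.coeff_C_mul, PowerSeries.coeff_mk, ← orbitSum_coeff_walkGF hS hsym,
      orbitSum_apply, map_sum]
    simp [PowerSeries.coeff_C_mul, ← coe_sigmaAlgHom]
  · rw [sum_sgnL_smul_sigmaL_zmon]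
    refine prod_congr rfl fun k _ => ?_
    congr 2 <;> funext j <;> simp [Pi.single_apply]

/-- The orbit sum identity: the signed sum over the group `G` of sign substitutions of
`σ(z₁⋯z_d)σ(F(z,t))` equals `(∑_σ sgn(σ)σ(z₁⋯z_d))/(1-tS(z))
= (z₁-z₁⁻¹)⋯(z_d-z_d⁻¹)/(1-tS(z))`, where `1/(1-tS(z)) = ∑_n S(z)^n t^n`. -/
theorem orbit_sum_identity (d : ℕ) (S : Finset (Fin d → ℤ))
    (hsteps : ∀ s ∈ S, (∀ k, s k = -1 ∨ s k = 0 ∨ s k = 1) ∧ s ≠ 0)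
    (hsym : ∀ s ∈ S, ∀ k, Function.update s k (-(s k)) ∈ S)
    (hfwd : ∀ k, ∃ s ∈ S, s k = 1) :
    (∑ ε : Fin d → Bool,
        sgnL d ε • (PowerSeries.C (sigmaL d ε (zmon d fun _ => 1)) *
          PowerSeries.mk fun n => sigmaL d ε (PowerSeries.coeff n (walkGF d S)))) =
      PowerSeries.C (∑ ε : Fin d → Bool, sgnL d ε • sigmaL d ε (zmon d fun _ => 1)) *
        PowerSeries.mk (fun n => charL d S ^ n) ∧
    (∑ ε : Fin d → Bool, sgnL d ε • sigmaL d ε (zmon d fun _ => 1)) =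
      ∏ k, (zmon d (fun j => if j = k then 1 else 0) -
            zmon d (fun j => if j = k then -1 else 0)) :=
  orbit_sum_identity_general d S hsteps hsym
end

section
/- Let B(z,t) ∈ ℚ[z_1,z_1^{−1},…,z_d,z_d^{−1}][[t]] and suppose every monomial appearing in σ(z_1⋯z_d)·σ(B(z,t)) for a non-identity sign substitution σ (σ: z_k ↦ z_k^{ε_k}, ε ≠ (1,…,1)) contains a negative power of at least one variable z_k with ε_k = −1. Then applying the non-negative part extraction [z_1^{≥0}]⋯[z_d^{≥0}] to the telescoped orbit sum ∑_{σ} sgn(σ) σ(z_1⋯z_d) σ(F(z,t)) yields (z_1⋯z_d)·F(z,t); in particular, [z_1^{≥0}]⋯[z_d^{≥0}] of (z_1 − z_1^{−1})⋯(z_d − z_d^{−1})/(1 − tS(z)) equals (z_1⋯z_d)F(z,t), so F(z,t) is recovered as a positive-part extraction of an explicit rational series. -/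
open scoped Classical in
/-- The non-negative part extraction `[z₁^{≥0}]⋯[z_d^{≥0}]`, keeping only Laurent
monomials all of whose exponents are non-negative. -/
noncomputable def posPart (d : ℕ) (a : LPoly d) : LPoly d :=
  AddMonoidAlgebra.ofCoeff (Finsupp.filter (fun e : Fin d →₀ ℤ => ∀ k, 0 ≤ e k) a.coeff)

namespace OrbitSum

open Finset
open scoped Classical

variable {d : ℕ}

lemma zmon_eq_single (i : Fin d → ℤ) :
    zmon d i = AddMonoidAlgebra.single (Finsupp.equivFunOnFinite.symm i) 1 :=
  AddMonoidAlgebra.ofCoeff_single _ _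

lemma zmon_zero : zmon d 0 = 1 := by
  rw [zmon_eq_single, AddMonoidAlgebra.one_def]
  congr 1; ext; simp

lemma zmon_add (x y : Fin d → ℤ) : zmon d (x + y) = zmon d x * zmon d y := by
  rw [zmon_eq_single, zmon_eq_single, zmon_eq_single, AddMonoidAlgebra.single_mul_single, one_mul]
  congr 1; ext; simp

lemma prod_zmon {ι : Type*} (s : Finset ι) (f : ι → Fin d → ℤ) :
    ∏ a ∈ s, zmon d (f a) = zmon d (∑ a ∈ s, f a) := by
  induction s using Finset.induction with
  | empty => rw [prod_empty, sum_empty, zmon_zero]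
  | insert a s ha ih => rw [prod_insert ha, sum_insert ha, zmon_add, ih]

lemma posPart_sum {ι : Type*} (s : Finset ι) (f : ι → LPoly d) :
    posPart d (∑ a ∈ s, f a) = ∑ a ∈ s, posPart d (f a) := by
  unfold _root_.posPart
  rw [AddMonoidAlgebra.coeff_sum, ← AddMonoidAlgebra.ofCoeff_sum]
  exact congrArg _ (map_sum (Finsupp.filterAddHom _) _ s)

lemma posPart_smul_zmon (c : ℚ) (x : Fin d → ℤ) :
    posPart d (c • zmon d x) = if 0 ≤ x then c • zmon d x else 0 := by
  have hx : (0 ≤ x) ↔ ∀ k, 0 ≤ Finsupp.equivFunOnFinite.symm x k := by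
    simp [Pi.le_def]
  rw [zmon_eq_single, AddMonoidAlgebra.smul_single, smul_eq_mul, mul_one, _root_.posPart,
    AddMonoidAlgebra.coeff_single]
  split_ifs with h
  · rw [Finsupp.filter_single_of_pos _ (hx.mp h)]; rfl
  · rw [Finsupp.filter_single_of_neg _ (hx.not.mp h)]; rfl

def signVectors (d : ℕ) : Finset (Fin d → ℤ) := Fintype.piFinset fun _ => {1, -1}

lemma prod_zmon_sub_zmon :
    ∏ k, (zmon d (fun j => if j = k then 1 else 0) - zmon d (fun j => if j = k then -1 else 0)) =
      ∑ x ∈ signVectors d, (∏ k, (x k : ℚ)) • zmon d x := by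
  have hfactor : ∀ k : Fin d, zmon d (fun j => if j = k then 1 else 0) -
      zmon d (fun j => if j = k then -1 else 0) =
        ∑ j ∈ ({1, -1} : Finset ℤ), (j : ℚ) • zmon d (Pi.single k j) := by
    intro k
    have hsingle (a : ℤ) : (fun j => if j = k then a else 0) = Pi.single k a :=
      funext fun j => (Pi.single_apply k a j).symm
    rw [sum_pair (by decide), hsingle, hsingle]
    simp [sub_eq_add_neg]
  simp_rw [hfactor, prod_univ_sum, prod_smul, prod_zmon, univ_sum_single]
  rfl

lemma charL_pow (S : Finset (Fin d → ℤ)) (n : ℕ) :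
    charL d S ^ n = ∑ w ∈ Fintype.piFinset fun _ : Fin n => S, zmon d (∑ l, w l) := by
  rw [← Fin.prod_const, charL, prod_univ_sum]
  simp_rw [prod_zmon]

abbrev SignedWalk (d n : ℕ) := (Fin d → ℤ) × (Fin n → Fin d → ℤ)

def signedWalks (S : Finset (Fin d → ℤ)) (n : ℕ) : Finset (SignedWalk d n) :=
  signVectors d ×ˢ Fintype.piFinset fun _ => S

def sign {n : ℕ} (p : SignedWalk d n) : ℚ := ∏ k, (p.1 k : ℚ)

def endpoint {n : ℕ} (p : SignedWalk d n) : Fin d → ℤ := p.1 + ∑ l, p.2 l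

lemma prod_zmon_sub_zmon_mul_charL_pow (S : Finset (Fin d → ℤ)) (n : ℕ) :
    (∏ k, (zmon d (fun j => if j = k then 1 else 0) -
        zmon d (fun j => if j = k then -1 else 0))) * charL d S ^ n =
      ∑ p ∈ signedWalks S n, sign p • zmon d (endpoint p) := by
  rw [prod_zmon_sub_zmon, charL_pow, sum_mul_sum, signedWalks, sum_product]
  simp_rw [smul_mul_assoc, ← zmon_add]
  rfl

lemma exists_le_eq_zero_of_succ_le_add_one {f : ℕ → ℤ} (hf : ∀ m, f (m + 1) ≤ f m + 1) {b : ℕ}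
    (h0 : f 0 ≤ 0) (hb : 0 ≤ f b) : ∃ m ≤ b, f m = 0 := by
  induction b with
  | zero => exact ⟨0, le_rfl, le_antisymm h0 hb⟩
  | succ b ih =>
    by_cases hb' : 0 ≤ f b
    · obtain ⟨m, hm, hfm⟩ := ih hb'
      exact ⟨m, by omega, hfm⟩
    · exact ⟨b + 1, le_rfl, by have := hf b; omega⟩

section PartialSum

variable {M : Type*} [AddCommMonoid M] {n : ℕ}

def partialSum (w : Fin n → M) (m : ℕ) : M :=
  ∑ l ∈ univ.filter (fun l : Fin n => (l : ℕ) < m), w l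

def stepAt (w : Fin n → M) (m : ℕ) : M := if h : m < n then w ⟨m, h⟩ else 0

lemma partialSum_zero (w : Fin n → M) : partialSum w 0 = 0 := by
  simp [partialSum]

lemma partialSum_succ (w : Fin n → M) (m : ℕ) :
    partialSum w (m + 1) = partialSum w m + stepAt w m := by
  unfold partialSum stepAt
  split_ifs with h
  · rw [← sum_filter_add_sum_filter_not (univ.filter fun l : Fin n => (l : ℕ) < m + 1)
      (fun l : Fin n => (l : ℕ) < m), filter_filter, filter_filter]
    congr 1
    · congr 1; ext l; simp only [mem_filter, mem_univ, true_and]; omega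
    · convert sum_singleton w (⟨m, h⟩ : Fin n)
      ext l; simp only [mem_filter, mem_univ, true_and, mem_singleton, Fin.ext_iff]; omega
  · rw [add_zero]
    congr 1; ext l; simp only [mem_filter, mem_univ, true_and]; omega

lemma partialSum_of_le (w : Fin n → M) {m : ℕ} (hm : n ≤ m) : partialSum w m = ∑ l, w l := by
  unfold partialSum
  rw [filter_true_of_mem fun l _ => l.isLt.trans_le hm]

end PartialSum

variable {n : ℕ}

def position (p : SignedWalk d n) (m : ℕ) : Fin d → ℤ := p.1 + partialSum p.2 m

lemma position_zero (p : SignedWalk d n) : position p 0 = p.1 := by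
  rw [position, partialSum_zero, add_zero]

lemma position_succ (p : SignedWalk d n) (m : ℕ) :
    position p (m + 1) = position p m + stepAt p.2 m := by
  rw [position, position, partialSum_succ, add_assoc]

lemma position_of_le (p : SignedWalk d n) {m : ℕ} (hm : n ≤ m) : position p m = endpoint p := by
  rw [position, partialSum_of_le _ hm, endpoint]

lemma abs_position_succ_sub_le {S : Finset (Fin d → ℤ)} (hS : ∀ s ∈ S, ∀ k, |s k| ≤ 1)
    {p : SignedWalk d n} (hp : p ∈ signedWalks S n) (m : ℕ) (k : Fin d) :
    |position p (m + 1) k - position p m k| ≤ 1 := by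
  rw [position_succ, Pi.add_apply, add_sub_cancel_left, stepAt]
  split_ifs with h
  · exact hS _ (Fintype.mem_piFinset.mp (mem_product.mp hp).2 _) k
  · simp

def reflect (k : Fin d) : (Fin d → ℤ) →+ (Fin d → ℤ) where
  toFun x := Function.update x k (-(x k))
  map_zero' := by simp
  map_add' x y := by
    ext j
    by_cases h : j = k
    · subst h; simp [add_comm]
    · simp [Function.update_of_ne h]

lemma reflect_apply_self (k : Fin d) (x : Fin d → ℤ) : reflect k x k = -x k :=
  Function.update_self _ _ _

lemma reflect_apply_of_ne {k j : Fin d} (h : j ≠ k) (x : Fin d → ℤ) : reflect k x j = x j :=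
  Function.update_of_ne h _ _

lemma reflect_reflect (k : Fin d) (x : Fin d → ℤ) : reflect k (reflect k x) = x := by
  ext j
  by_cases h : j = k
  · subst h; rw [reflect_apply_self, reflect_apply_self, neg_neg]
  · rw [reflect_apply_of_ne h, reflect_apply_of_ne h]

lemma reflect_apply_eq_zero_iff (k j : Fin d) (x : Fin d → ℤ) : reflect k x j = 0 ↔ x j = 0 := by
  by_cases h : j = k
  · subst h; rw [reflect_apply_self, neg_eq_zero]
  · rw [reflect_apply_of_ne h]

lemma reflect_eq_self {k : Fin d} {x : Fin d → ℤ} (h : x k = 0) : reflect k x = x :=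
  Function.update_eq_self_iff.mpr (by rw [h, neg_zero])

lemma prod_reflect (k : Fin d) (x : Fin d → ℤ) :
    ∏ j, (reflect k x j : ℚ) = -∏ j, (x j : ℚ) := by
  rw [← mul_prod_erase univ _ (mem_univ k), ← mul_prod_erase univ _ (mem_univ k),
    reflect_apply_self, prod_congr rfl fun j hj => by rw [reflect_apply_of_ne (ne_of_mem_erase hj)]]
  push_cast
  ring

lemma reflect_mem_signVectors (k : Fin d) {x : Fin d → ℤ} (hx : x ∈ signVectors d) :
    reflect k x ∈ signVectors d := by
  simp only [signVectors, Fintype.mem_piFinset, mem_insert, mem_singleton] at hx ⊢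
  intro j
  by_cases h : j = k
  · subst h; rw [reflect_apply_self]; rcases hx j with h | h <;> simp [h]
  · rw [reflect_apply_of_ne h]; exact hx j

def reflectUpTo (k : Fin d) (m : ℕ) (p : SignedWalk d n) : SignedWalk d n :=
  (reflect k p.1, fun l => if (l : ℕ) < m then reflect k (p.2 l) else p.2 l)

lemma stepAt_reflectUpTo (k : Fin d) (m : ℕ) (p : SignedWalk d n) (m' : ℕ) :
    stepAt (reflectUpTo k m p).2 m' =
      if m' < m then reflect k (stepAt p.2 m') else stepAt p.2 m' := by
  unfold stepAt reflectUpTo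
  split_ifs <;> simp_all

lemma position_reflectUpTo_of_le (k : Fin d) (p : SignedWalk d n) {m m' : ℕ} (h : m' ≤ m) :
    position (reflectUpTo k m p) m' = reflect k (position p m') := by
  induction m' with
  | zero => rw [position_zero, position_zero]; rfl
  | succ m' ih =>
    rw [position_succ, position_succ, ih (by omega), stepAt_reflectUpTo, if_pos (by omega), map_add]

lemma position_reflectUpTo_of_ge {k : Fin d} {m : ℕ} {p : SignedWalk d n}
    (hzero : position p m k = 0) {m' : ℕ} (h : m ≤ m') :
    position (reflectUpTo k m p) m' = position p m' := by
  induction m', h using Nat.le_induction with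
  | base => rw [position_reflectUpTo_of_le k p le_rfl, reflect_eq_self hzero]
  | succ m' hm ih => rw [position_succ, position_succ, ih, stepAt_reflectUpTo, if_neg (by omega)]

def zeroSet (p : SignedWalk d n) : Finset (Fin (n + 1) ×ₗ Fin d) :=
  univ.filter fun z => position p (ofLex z).1 (ofLex z).2 = 0

def Touches (p : SignedWalk d n) : Prop := (zeroSet p).Nonempty

/-- The lexicographically first (time, coordinate) on a coordinate hyperplane. It depends only
on `zeroSet p`, which the reflection below preserves; this makes the reflection an involution. -/
def firstZero (p : SignedWalk d n) (h : Touches p) : Fin (n + 1) × Fin d :=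
  ofLex ((zeroSet p).min' h)

def reflectAtFirstZero (p : SignedWalk d n) (h : Touches p) : SignedWalk d n :=
  reflectUpTo (firstZero p h).2 (firstZero p h).1 p

lemma position_firstZero (p : SignedWalk d n) (h : Touches p) :
    position p (firstZero p h).1 (firstZero p h).2 = 0 :=
  (mem_filter.mp (min'_mem _ h)).2

lemma zeroSet_reflectUpTo {k : Fin d} {m : ℕ} {p : SignedWalk d n} (hzero : position p m k = 0) :
    zeroSet (reflectUpTo k m p) = zeroSet p := by
  ext z
  simp only [zeroSet, mem_filter, mem_univ, true_and]
  rcases le_total ((ofLex z).1 : ℕ) m with h | h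
  · rw [position_reflectUpTo_of_le k p h, reflect_apply_eq_zero_iff]
  · rw [position_reflectUpTo_of_ge hzero h]

section Involution

variable (p : SignedWalk d n) (h : Touches p)

lemma zeroSet_reflectAtFirstZero : zeroSet (reflectAtFirstZero p h) = zeroSet p :=
  zeroSet_reflectUpTo (position_firstZero p h)

lemma touches_reflectAtFirstZero : Touches (reflectAtFirstZero p h) := by
  rw [Touches, zeroSet_reflectAtFirstZero]
  exact h

lemma firstZero_reflectAtFirstZero :
    firstZero (reflectAtFirstZero p h) (touches_reflectAtFirstZero p h) = firstZero p h := by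
  simp only [firstZero, zeroSet_reflectAtFirstZero]

lemma reflectAtFirstZero_reflectAtFirstZero :
    reflectAtFirstZero (reflectAtFirstZero p h) (touches_reflectAtFirstZero p h) = p := by
  conv_lhs => rw [reflectAtFirstZero, firstZero_reflectAtFirstZero]
  ext l
  · exact congrFun (reflect_reflect _ _) _
  · simp only [reflectAtFirstZero, reflectUpTo]
    split_ifs <;> simp [reflect_reflect]

lemma endpoint_reflectAtFirstZero : endpoint (reflectAtFirstZero p h) = endpoint p := by
  rw [← position_of_le _ le_rfl, ← position_of_le _ le_rfl]
  exact position_reflectUpTo_of_ge (position_firstZero p h)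
    (Nat.lt_succ_iff.mp (firstZero p h).1.isLt)

lemma sign_reflectAtFirstZero : sign (reflectAtFirstZero p h) = -sign p :=
  prod_reflect _ _

lemma reflectAtFirstZero_mem {S : Finset (Fin d → ℤ)}
    (hsym : ∀ s ∈ S, ∀ k, reflect k s ∈ S) (hp : p ∈ signedWalks S n) :
    reflectAtFirstZero p h ∈ signedWalks S n := by
  rw [signedWalks, mem_product, Fintype.mem_piFinset] at hp ⊢
  refine ⟨reflect_mem_signVectors _ hp.1, fun l => ?_⟩
  dsimp only [reflectAtFirstZero, reflectUpTo]
  split_ifs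
  · exact hsym _ (hp.2 l) _
  · exact hp.2 l

end Involution

lemma sum_nonneg_endpoint_touches_eq_zero {S : Finset (Fin d → ℤ)}
    (hsym : ∀ s ∈ S, ∀ k, reflect k s ∈ S) :
    ∑ p ∈ (signedWalks S n).filter (fun p => 0 ≤ endpoint p ∧ Touches p),
      sign p • zmon d (endpoint p) = 0 := by
  refine sum_involution (fun p hp => reflectAtFirstZero p (mem_filter.mp hp).2.2)
    (fun p hp => ?cancel) (fun p hp hne heq => ?ne) (fun p hp => ?mem)
    (fun p hp => reflectAtFirstZero_reflectAtFirstZero p _)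
  case cancel =>
    rw [endpoint_reflectAtFirstZero, sign_reflectAtFirstZero, neg_smul, add_neg_cancel]
  case ne =>
    -- a fixed point would satisfy `sign p = -sign p`
    have hsign := sign_reflectAtFirstZero p (mem_filter.mp hp).2.2
    rw [heq, CharZero.eq_neg_self_iff] at hsign
    exact hne (by rw [hsign, zero_smul])
  case mem =>
    obtain ⟨hp, hend, htouch⟩ := mem_filter.mp hp
    exact mem_filter.mpr ⟨reflectAtFirstZero_mem p htouch hsym hp,
      (endpoint_reflectAtFirstZero p htouch).symm ▸ hend, touches_reflectAtFirstZero p htouch⟩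

lemma touches_of_position_eq_zero {p : SignedWalk d n} {m : ℕ} {k : Fin d}
    (h : position p m k = 0) : Touches p := by
  have hmin : position p (min m n) k = 0 := by
    rcases le_total m n with hmn | hmn
    · rwa [min_eq_left hmn]
    · rwa [min_eq_right hmn, position_of_le _ le_rfl, ← position_of_le _ hmn]
  exact ⟨toLex (⟨min m n, by omega⟩, k), by simpa [zeroSet] using hmin⟩

lemma touches_of_mul_nonpos {S : Finset (Fin d → ℤ)} (hS : ∀ s ∈ S, ∀ k, |s k| ≤ 1)
    {p : SignedWalk d n} (hp : p ∈ signedWalks S n) {m : ℕ} {k : Fin d}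
    (h : position p 0 k * position p m k ≤ 0) : Touches p := by
  have hstep m := abs_le.mp (abs_position_succ_sub_le hS hp m k)
  rcases mul_nonpos_iff.mp h with ⟨h0, hm⟩ | ⟨h0, hm⟩
  · obtain ⟨m', -, hm'⟩ := exists_le_eq_zero_of_succ_le_add_one (f := fun m => -position p m k)
      (fun m => by linarith [hstep m]) (neg_nonpos.mpr h0) (neg_nonneg.mpr hm)
    exact touches_of_position_eq_zero (neg_eq_zero.mp hm')
  · obtain ⟨m', -, hm'⟩ := exists_le_eq_zero_of_succ_le_add_one (f := fun m => position p m k)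
      (fun m => by linarith [hstep m]) h0 hm
    exact touches_of_position_eq_zero hm'

noncomputable def quadrantWalks (S : Finset (Fin d → ℤ)) (n : ℕ) : Finset (Fin n → Fin d → ℤ) :=
  (Fintype.piFinset fun _ => S).filter fun w => ∀ m k, 0 ≤ partialSum w m k

lemma nonneg_endpoint_and_not_touches_iff {S : Finset (Fin d → ℤ)}
    (hS : ∀ s ∈ S, ∀ k, |s k| ≤ 1) {p : SignedWalk d n} (hp : p ∈ signedWalks S n) :
    0 ≤ endpoint p ∧ ¬Touches p ↔ p.1 = 1 ∧ ∀ m k, 0 ≤ partialSum p.2 m k := by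
  have hsigns : ∀ k, p.1 k = 1 ∨ p.1 k = -1 := by
    simpa [signedWalks, signVectors] using (mem_product.mp hp).1
  constructor
  · rintro ⟨hend, hnot⟩
    have hstart : p.1 = 1 := by
      funext k
      refine (hsigns k).resolve_right fun hk =>
        hnot (touches_of_mul_nonpos hS hp (m := n) (k := k) ?_)
      rw [position_zero, hk, position_of_le _ le_rfl]
      linarith [show (0 : ℤ) ≤ endpoint p k from hend k]
    refine ⟨hstart, fun m k => ?_⟩
    by_contra hneg
    refine hnot (touches_of_mul_nonpos hS hp (m := m) (k := k) ?_)
    rw [position_zero, hstart, Pi.one_apply, one_mul, position, hstart, Pi.add_apply, Pi.one_apply]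
    linarith
  · rintro ⟨hstart, hquad⟩
    have hpos m k : 0 < position p m k := by
      simp only [position, hstart, Pi.add_apply, Pi.one_apply]
      linarith [hquad m k]
    refine ⟨fun k => ?_, fun ⟨z, hz⟩ => ?_⟩
    · rw [← position_of_le p le_rfl]
      exact (hpos n k).le
    · exact (hpos _ _).ne' (mem_filter.mp hz).2

lemma sum_nonneg_endpoint_not_touches_eq {S : Finset (Fin d → ℤ)} (hS : ∀ s ∈ S, ∀ k, |s k| ≤ 1) :
    ∑ p ∈ (signedWalks S n).filter (fun p => 0 ≤ endpoint p ∧ ¬Touches p),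
      sign p • zmon d (endpoint p) = ∑ w ∈ quadrantWalks S n, zmon d (1 + ∑ l, w l) := by
  have hone : (1 : Fin d → ℤ) ∈ signVectors d := by simp [signVectors]
  have hset : (signedWalks S n).filter (fun p => 0 ≤ endpoint p ∧ ¬Touches p) =
      {1} ×ˢ quadrantWalks S n := by
    ext p
    simp only [mem_filter, mem_product, mem_singleton, quadrantWalks]
    constructor
    · rintro ⟨hp, hgood⟩
      obtain ⟨hstart, hquad⟩ := (nonneg_endpoint_and_not_touches_iff hS hp).mp hgood
      exact ⟨hstart, (mem_product.mp hp).2, hquad⟩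
    · rintro ⟨hstart, hsteps, hquad⟩
      have hp : p ∈ signedWalks S n := mem_product.mpr ⟨hstart ▸ hone, hsteps⟩
      exact ⟨hp, (nonneg_endpoint_and_not_touches_iff hS hp).mpr ⟨hstart, hquad⟩⟩
  rw [hset, sum_product, sum_singleton]
  simp [sign, endpoint]

lemma walkCount_eq_card (S : Finset (Fin d → ℤ)) (n : ℕ) (i : Fin d → ℤ) :
    WalkCount d S n i = #((quadrantWalks S n).filter fun w => ∑ l, w l = i) := by
  rw [WalkCount, ← Set.ncard_coe_finset, ← Nat.card_coe_set_eq]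
  refine Nat.card_congr (Equiv.subtypeEquivRight fun w => ?_)
  simp [quadrantWalks, partialSum, funext_iff, Finset.sum_apply, and_assoc]

lemma sum_mem_Icc_of_mem_quadrantWalks {S : Finset (Fin d → ℤ)} (hS : ∀ s ∈ S, ∀ k, |s k| ≤ 1)
    {w : Fin n → Fin d → ℤ} (hw : w ∈ quadrantWalks S n) (k : Fin d) :
    ∑ l, w l k ∈ Set.Icc 0 (n : ℤ) := by
  obtain ⟨hsteps, hquad⟩ := mem_filter.mp hw
  refine ⟨?_, ?_⟩
  · simpa [partialSum_of_le w le_rfl, Finset.sum_apply] using hquad n k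
  · calc ∑ l, w l k ≤ ∑ _l : Fin n, (1 : ℤ) :=
          sum_le_sum fun l _ => (abs_le.mp (hS _ (Fintype.mem_piFinset.mp hsteps l) k)).2
      _ = n := by simp

lemma sum_quadrantWalks_zmon {S : Finset (Fin d → ℤ)} (hS : ∀ s ∈ S, ∀ k, |s k| ≤ 1) :
    ∑ w ∈ quadrantWalks S n, zmon d (∑ l, w l) =
      ∑ i : Fin d → Fin (n + 1),
        ((WalkCount d S n fun j => ((i j : ℕ) : ℤ)) : ℚ) • zmon d fun j => ((i j : ℕ) : ℤ) := by
  let clamp (w : Fin n → Fin d → ℤ) : Fin d → Fin (n + 1) :=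
    fun k => ⟨min (∑ l, w l k).toNat n, by omega⟩
  have hfiber : ∀ i, ∀ w ∈ quadrantWalks S n,
      clamp w = i ↔ ∑ l, w l = fun j => ((i j : ℕ) : ℤ) := by
    intro i w hw
    simp only [funext_iff, Fin.ext_iff, clamp, Finset.sum_apply]
    refine forall_congr' fun k => ?_
    obtain ⟨_, _⟩ := sum_mem_Icc_of_mem_quadrantWalks hS hw k
    have := (i k).isLt
    omega
  rw [← sum_fiberwise_of_maps_to (g := clamp) (t := univ) fun _ _ => mem_univ _]
  refine sum_congr rfl fun i _ => ?_
  rw [walkCount_eq_card, filter_congr (hfiber i), sum_congr rfl fun w hw => by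
    rw [(mem_filter.mp hw).2], sum_const, Nat.cast_smul_eq_nsmul]

lemma posPart_prod_mul_charL_pow {S : Finset (Fin d → ℤ)} (hS : ∀ s ∈ S, ∀ k, |s k| ≤ 1)
    (hsym : ∀ s ∈ S, ∀ k, reflect k s ∈ S) (n : ℕ) :
    posPart d ((∏ k, (zmon d (fun j => if j = k then 1 else 0) -
        zmon d (fun j => if j = k then -1 else 0))) * charL d S ^ n) =
      ∑ w ∈ quadrantWalks S n, zmon d (1 + ∑ l, w l) := by
  rw [prod_zmon_sub_zmon_mul_charL_pow, posPart_sum]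
  simp_rw [posPart_smul_zmon]
  rw [← sum_filter, ← sum_filter_add_sum_filter_not _ Touches, filter_filter, filter_filter,
    sum_nonneg_endpoint_touches_eq_zero hsym, zero_add, sum_nonneg_endpoint_not_touches_eq hS]

end OrbitSum

theorem posPart_orbit_sum_eq_walkGF_general (d : ℕ) (S : Finset (Fin d → ℤ))
    (hsteps : ∀ s ∈ S, (∀ k, s k = -1 ∨ s k = 0 ∨ s k = 1) ∧ s ≠ 0)
    (hsym : ∀ s ∈ S, ∀ k, Function.update s k (-(s k)) ∈ S) :
    ∀ n, posPart d (PowerSeries.coeff n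
        (PowerSeries.C (∏ k, (zmon d (fun j => if j = k then 1 else 0) -
            zmon d (fun j => if j = k then -1 else 0))) *
          PowerSeries.mk (fun m => charL d S ^ m))) =
      PowerSeries.coeff n (PowerSeries.C (zmon d fun _ => 1) * walkGF d S) := by
  intro n
  have hS : ∀ s ∈ S, ∀ k, |s k| ≤ 1 := fun s hs k => by
    rcases (hsteps s hs).1 k with h | h | h <;> simp [h]
  rw [PowerSeries.coeff_C_mul, PowerSeries.coeff_mk, PowerSeries.coeff_C_mul, walkGF,
    PowerSeries.coeff_mk, OrbitSum.posPart_prod_mul_charL_pow hS hsym,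
    ← OrbitSum.sum_quadrantWalks_zmon hS, Finset.mul_sum]
  simp_rw [OrbitSum.zmon_add]
  rfl

/-- Positive-part extraction of the orbit sum recovers the generating function:
`[z₁^{≥0}]⋯[z_d^{≥0}] ((z₁-z₁⁻¹)⋯(z_d-z_d⁻¹)/(1-tS(z))) = (z₁⋯z_d)·F(z,t)`,
coefficientwise in `t`, where `1/(1-tS(z)) = ∑_n S(z)^n t^n`. -/
theorem posPart_orbit_sum_eq_walkGF (d : ℕ) (S : Finset (Fin d → ℤ))
    (hsteps : ∀ s ∈ S, (∀ k, s k = -1 ∨ s k = 0 ∨ s k = 1) ∧ s ≠ 0)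
    (hsym : ∀ s ∈ S, ∀ k, Function.update s k (-(s k)) ∈ S)
    (hfwd : ∀ k, ∃ s ∈ S, s k = 1) :
    ∀ n, posPart d (PowerSeries.coeff n
        (PowerSeries.C (∏ k, (zmon d (fun j => if j = k then 1 else 0) -
            zmon d (fun j => if j = k then -1 else 0))) *
          PowerSeries.mk (fun m => charL d S ^ m))) =
      PowerSeries.coeff n (PowerSeries.C (zmon d fun _ => 1) * walkGF d S) :=
  posPart_orbit_sum_eq_walkGF_general d S hsteps hsym
end
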